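/- Every bounded entire C² solution u : ℝⁿ → ℝ^m of the Ginzburg–Landau system Δu = (|u|² − 1)u satisfies |u(x)| ≤ 1 for all x ∈ ℝⁿ; moreover if u is not constant then |u(x)| < 1 for all x ∈ ℝⁿ. -/

import Mathlib

/-
`W = ‖u‖²` satisfies `ΔW = 2 ∑ᵢ ‖∂ᵢu‖² + 2⟪u, Δu⟫ ≥ 2 (W - 1) W ≥ 2 (W - 1)`.

Bound: if `W y > 1`, then `W - δ ‖x - y‖²` tends to `-∞` and so has a global maximum `x`, where
`W x ≥ W y` while `ΔW x ≤ 2 δ n`; for small `δ` this contradicts `ΔW ≥ 2 (W - 1)`.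

Strict bound: if `W = 1` at some point but `W < 1` at `p`, the largest ball `B(p, R)` inside
`{W < 1}` touches `{W = 1}` at some `y`. For large `α`, `G = exp (-α ‖x - p‖²)` has `ΔG ≥ 3 G` on
the annulus `R / 2 ≤ ‖x - p‖ ≤ R`, so the maximum principle bounds `W + ε (G - G(y))` by `1`
there. Equality holds at `y`, so the derivative of `W` at `y` towards `p` is negative, although
`y` is a maximum of `W`. Hence `W ≡ 1`, then `Δu = 0`, and the identity for `ΔW` gives `∂ᵢu = 0`.
-/

/-- Componentwise Laplacian of a map `ℝⁿ → ℝᵐ`. -/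
noncomputable def vectorLaplacian {n m : ℕ}
    (u : EuclideanSpace ℝ (Fin n) → EuclideanSpace ℝ (Fin m))
    (x : EuclideanSpace ℝ (Fin n)) : EuclideanSpace ℝ (Fin m) :=
  ∑ i : Fin n, fderiv ℝ (fun y => fderiv ℝ u y (EuclideanSpace.single i 1)) x
    (EuclideanSpace.single i 1)

open Filter Metric Set Topology InnerProductSpace Laplacian RealInnerProductSpace

theorem IsLocalMax.deriv_deriv_nonpos {f : ℝ → ℝ} {a : ℝ} (h : IsLocalMax f a)
    (hf : ContinuousAt f a) : deriv (deriv f) a ≤ 0 := by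
  by_contra! hpos
  have hmin := isLocalMin_of_deriv_deriv_pos hpos h.deriv_eq_zero hf
  have hconst : f =ᶠ[𝓝 a] fun _ => f a := by
    filter_upwards [h, hmin] with t hmax hmin using le_antisymm hmax hmin
  rw [hconst.deriv.deriv_eq] at hpos
  simp at hpos

section
variable {E F : Type*} [NormedAddCommGroup E] [NormedSpace ℝ E]
  [NormedAddCommGroup F] [NormedSpace ℝ F]

theorem ContDiff.differentiable_fderiv_apply {f : E → F} (hf : ContDiff ℝ 2 f) (v : E) :
    Differentiable ℝ fun y => fderiv ℝ f y v :=
  ((hf.fderiv_right le_rfl).clm_apply contDiff_const).differentiable one_ne_zero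

theorem deriv_deriv_comp_add_smul {f : E → F} (hf : ContDiff ℝ 2 f) (x v : E) :
    deriv (deriv fun t : ℝ => f (x + t • v)) 0 = fderiv ℝ (fun y => fderiv ℝ f y v) x v := by
  have hline : ∀ t : ℝ, HasDerivAt (fun s : ℝ => x + s • v) v t := fun t => by
    simpa using ((hasDerivAt_id t).smul_const v).const_add x
  have hderiv : deriv (fun t : ℝ => f (x + t • v)) = fun t => fderiv ℝ f (x + t • v) v :=
    funext fun t => ((hf.differentiable two_ne_zero _).hasFDerivAt.comp_hasDerivAt t
      (hline t)).deriv
  have h2 := (hf.differentiable_fderiv_apply v (x + (0 : ℝ) • v)).hasFDerivAt.comp_hasDerivAt 0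
    (hline 0)
  rw [hderiv]
  simpa [Function.comp_def] using h2.deriv

theorem IsLocalMax.fderiv_fderiv_apply_nonpos {f : E → ℝ} (hf : ContDiff ℝ 2 f) {x : E}
    (h : IsLocalMax f x) (v : E) : fderiv ℝ (fun y => fderiv ℝ f y v) x v ≤ 0 := by
  have hline : Continuous fun t : ℝ => x + t • v := by fun_prop
  have hmax : IsLocalMax (fun t : ℝ => f (x + t • v)) 0 :=
    IsLocalMax.comp_continuous (g := fun t : ℝ => x + t • v) (by simpa using h)
      hline.continuousAt
  rw [← deriv_deriv_comp_add_smul hf]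
  exact hmax.deriv_deriv_nonpos (hf.continuous.comp hline).continuousAt

end

section
variable {E : Type*} [NormedAddCommGroup E] [NormedSpace ℝ E]

theorem fderiv_fderiv_comp_apply {h : ℝ → ℝ} (hh : ContDiff ℝ 2 h) {g : E → ℝ}
    (hg : ContDiff ℝ 2 g) (x v : E) :
    fderiv ℝ (fun y => fderiv ℝ (fun z => h (g z)) y v) x v
      = deriv (deriv h) (g x) * fderiv ℝ g x v ^ 2
        + deriv h (g x) * fderiv ℝ (fun y => fderiv ℝ g y v) x v := by
  have hh' : Differentiable ℝ (deriv h) := by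
    rw [show (2 : WithTop ℕ∞) = 1 + 1 from rfl, contDiff_succ_iff_deriv] at hh
    exact hh.2.2.differentiable one_ne_zero
  have hg1 := hg.differentiable two_ne_zero
  have hfirst : (fun y => fderiv ℝ (fun z => h (g z)) y v)
      = fun y => deriv h (g y) * fderiv ℝ g y v := by
    funext y
    change fderiv ℝ (h ∘ g) y v = _
    rw [((hh.differentiable two_ne_zero _).hasDerivAt.comp_hasFDerivAt y
      (hg1 y).hasFDerivAt).fderiv]
    rfl
  have hc : DifferentiableAt ℝ (fun y => deriv h (g y)) x := (hh' _).comp x (hg1 x)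
  rw [hfirst, fderiv_fun_mul hc (hg.differentiable_fderiv_apply v x),
    fderiv_fun_comp x (hh' _) (hg1 x)]
  simp only [add_apply, smul_apply, ContinuousLinearMap.comp_apply, smul_eq_mul,
    fderiv_eq_smul_deriv]
  ring

end

section
variable {E F : Type*} [NormedAddCommGroup E] [NormedSpace ℝ E]
  [NormedAddCommGroup F] [InnerProductSpace ℝ F]

theorem fderiv_norm_sq_comp_apply {φ : E → F} {y : E} (hφ : DifferentiableAt ℝ φ y) (v : E) :
    fderiv ℝ (fun z => ‖φ z‖ ^ 2) y v = 2 * ⟪φ y, fderiv ℝ φ y v⟫ := by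
  rw [hφ.hasFDerivAt.norm_sq.fderiv]
  simp

theorem fderiv_fderiv_norm_sq_comp_apply {φ : E → F} (hφ : ContDiff ℝ 2 φ) (x v : E) :
    fderiv ℝ (fun y => fderiv ℝ (fun z => ‖φ z‖ ^ 2) y v) x v
      = 2 * ‖fderiv ℝ φ x v‖ ^ 2 + 2 * ⟪φ x, fderiv ℝ (fun y => fderiv ℝ φ y v) x v⟫ := by
  have hφ1 := hφ.differentiable two_ne_zero
  have hφ' := hφ.differentiable_fderiv_apply v
  simp_rw [fderiv_norm_sq_comp_apply (hφ1 _)]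
  rw [fderiv_const_mul ((hφ1 x).inner ℝ (hφ' x))]
  simp only [smul_apply, smul_eq_mul, fderiv_inner_apply ℝ (hφ1 x) (hφ' x)]
  rw [real_inner_comm (fderiv ℝ φ x v), real_inner_self_eq_norm_sq]
  ring

end

section
variable {E : Type*} [NormedAddCommGroup E] [InnerProductSpace ℝ E]

theorem contDiff_norm_sub_sq {n : WithTop ℕ∞} (p : E) : ContDiff ℝ n fun z => ‖z - p‖ ^ 2 :=
  (contDiff_norm_sq ℝ).comp (contDiff_id.sub contDiff_const)

theorem fderiv_norm_sub_sq_apply (p y v : E) :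
    fderiv ℝ (fun z => ‖z - p‖ ^ 2) y v = 2 * ⟪y - p, v⟫ := by
  rw [fderiv_norm_sq_comp_apply (by fun_prop), fderiv_sub_const, fderiv_fun_id]
  rfl

theorem fderiv_fderiv_norm_sub_sq_apply (p x v : E) :
    fderiv ℝ (fun y => fderiv ℝ (fun z => ‖z - p‖ ^ 2) y v) x v = 2 * ‖v‖ ^ 2 := by
  rw [fderiv_fderiv_norm_sq_comp_apply (by fun_prop)]
  simp [fderiv_sub_const]

theorem fderiv_gaussian_apply (p : E) (α : ℝ) (y v : E) :
    fderiv ℝ (fun z => Real.exp (-α * ‖z - p‖ ^ 2)) y v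
      = -(2 * α * ⟪y - p, v⟫) * Real.exp (-α * ‖y - p‖ ^ 2) := by
  have hq : DifferentiableAt ℝ (fun z => ‖z - p‖ ^ 2) y :=
    (contDiff_norm_sub_sq p (n := 1)).differentiable one_ne_zero y
  rw [fderiv_exp (hq.const_mul (-α)), fderiv_const_mul hq]
  simp [fderiv_norm_sub_sq_apply]
  ring

theorem fderiv_fderiv_gaussian_apply (p : E) (α : ℝ) (x v : E) :
    fderiv ℝ (fun y => fderiv ℝ (fun z => Real.exp (-α * ‖z - p‖ ^ 2)) y v) x v
      = (4 * α ^ 2 * ⟪x - p, v⟫ ^ 2 - 2 * α * ‖v‖ ^ 2) * Real.exp (-α * ‖x - p‖ ^ 2) := by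
  have hexp : ContDiff ℝ 2 fun s => Real.exp (-α * s) := by fun_prop
  have hd : ∀ s, HasDerivAt (fun s => Real.exp (-α * s)) (-α * Real.exp (-α * s)) s := fun s => by
    simpa [mul_comm] using ((hasDerivAt_id s).const_mul (-α)).exp
  have hd' : deriv (fun s => Real.exp (-α * s)) = fun s => -α * Real.exp (-α * s) :=
    funext fun s => (hd s).deriv
  rw [fderiv_fderiv_comp_apply hexp (contDiff_norm_sub_sq p), fderiv_norm_sub_sq_apply,
    fderiv_fderiv_norm_sub_sq_apply, hd', ((hd _).const_mul (-α)).deriv]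
  ring

end

section
variable {E F : Type*} [NormedAddCommGroup E] [InnerProductSpace ℝ E] [FiniteDimensional ℝ E]
  [NormedAddCommGroup F] [NormedSpace ℝ F]

theorem laplacian_eq_sum_fderiv_fderiv {ι : Type*} [Fintype ι] {f : E → F}
    (hf : ContDiff ℝ 2 f) (b : OrthonormalBasis ι ℝ E) (x : E) :
    Δ f x = ∑ i, fderiv ℝ (fun y => fderiv ℝ f y (b i)) x (b i) := by
  rw [laplacian_eq_iteratedFDeriv_orthonormalBasis f b]
  refine Finset.sum_congr rfl fun i _ => ?_
  rw [iteratedFDeriv_two_apply, fderiv_clm_apply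
    ((hf.fderiv_right le_rfl).differentiable one_ne_zero x) (differentiableAt_const _)]
  simp

theorem IsLocalMax.laplacian_nonpos {f : E → ℝ} (hf : ContDiff ℝ 2 f) {x : E}
    (h : IsLocalMax f x) : Δ f x ≤ 0 := by
  rw [laplacian_eq_sum_fderiv_fderiv hf (stdOrthonormalBasis ℝ E)]
  exact Finset.sum_nonpos fun i _ => h.fderiv_fderiv_apply_nonpos hf _

end

section
variable {E F : Type*} [NormedAddCommGroup E] [InnerProductSpace ℝ E] [FiniteDimensional ℝ E]
  [NormedAddCommGroup F] [InnerProductSpace ℝ F]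

theorem laplacian_norm_sq_comp {ι : Type*} [Fintype ι] (b : OrthonormalBasis ι ℝ E) {u : E → F}
    (hu : ContDiff ℝ 2 u) (x : E) :
    Δ (fun z => ‖u z‖ ^ 2) x = 2 * ∑ i, ‖fderiv ℝ u x (b i)‖ ^ 2 + 2 * ⟪u x, Δ u x⟫ := by
  rw [laplacian_eq_sum_fderiv_fderiv (hu.norm_sq ℝ) b, laplacian_eq_sum_fderiv_fderiv hu b,
    inner_sum, Finset.mul_sum, Finset.mul_sum, ← Finset.sum_add_distrib]
  simp only [fderiv_fderiv_norm_sq_comp_apply hu]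

theorem two_mul_sub_one_le_laplacian_norm_sq {u : E → F} (hu : ContDiff ℝ 2 u) {x : E}
    (hx : Δ u x = (‖u x‖ ^ 2 - 1) • u x) :
    2 * (‖u x‖ ^ 2 - 1) ≤ Δ (fun z => ‖u z‖ ^ 2) x := by
  set b := stdOrthonormalBasis ℝ E
  rw [laplacian_norm_sq_comp b hu, hx, real_inner_smul_right, real_inner_self_eq_norm_sq]
  nlinarith [Finset.sum_nonneg fun i (_ : i ∈ Finset.univ) => sq_nonneg ‖fderiv ℝ u x (b i)‖,
    sq_nonneg (‖u x‖ ^ 2 - 1)]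

theorem exists_forall_eq_of_laplacian_eq_zero_of_norm_eq {u : E → F} (hu : ContDiff ℝ 2 u)
    {r : ℝ} (hnorm : ∀ x, ‖u x‖ = r) (hΔ : ∀ x, Δ u x = 0) : ∃ c, ∀ x, u x = c := by
  set b := stdOrthonormalBasis ℝ E
  have hDu : ∀ x, fderiv ℝ u x = 0 := fun x => by
    have hsum := laplacian_norm_sq_comp b hu x
    rw [show (fun z => ‖u z‖ ^ 2) = fun _ => r ^ 2 from funext fun z => by rw [hnorm],
      laplacian_const, hΔ, inner_zero_right] at hsum
    have hzero := (Finset.sum_eq_zero_iff_of_nonneg fun i _ => sq_nonneg ‖fderiv ℝ u x (b i)‖).1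
      (by simpa using hsum.symm)
    refine ContinuousLinearMap.coe_injective (b.toBasis.ext fun i => ?_)
    simpa using hzero i (Finset.mem_univ i)
  exact ⟨u 0, fun x => is_const_of_fderiv_eq_zero (hu.differentiable two_ne_zero) hDu x 0⟩

end

theorem frontier_closedBall_diff_ball_subset {X : Type*} [PseudoMetricSpace X] (p : X) (r s : ℝ) :
    frontier (closedBall p r \ ball p s) ⊆ sphere p r ∪ sphere p s := by
  rw [sdiff_eq]
  refine (frontier_inter_subset _ _).trans (union_subset_union ?_ ?_)
  · exact inter_subset_left.trans frontier_closedBall_subset_sphere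
  · exact inter_subset_right.trans ((frontier_compl _).subset.trans frontier_ball_subset_sphere)

section
variable {E : Type*} [NormedAddCommGroup E] [InnerProductSpace ℝ E] [FiniteDimensional ℝ E]

theorem laplacian_norm_sub_sq (p x : E) :
    Δ (fun z => ‖z - p‖ ^ 2) x = 2 * Module.finrank ℝ E := by
  rw [laplacian_eq_sum_fderiv_fderiv (contDiff_norm_sub_sq p) (stdOrthonormalBasis ℝ E)]
  simp [fderiv_fderiv_norm_sub_sq_apply, OrthonormalBasis.norm_eq_one, mul_comm]

theorem laplacian_gaussian (p : E) (α : ℝ) (x : E) :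
    Δ (fun z => Real.exp (-α * ‖z - p‖ ^ 2)) x
      = (4 * α ^ 2 * ‖x - p‖ ^ 2 - 2 * α * Module.finrank ℝ E) * Real.exp (-α * ‖x - p‖ ^ 2) := by
  have hg : ContDiff ℝ 2 fun z : E => Real.exp (-α * ‖z - p‖ ^ 2) :=
    Real.contDiff_exp.comp (contDiff_const.mul (contDiff_norm_sub_sq p))
  set b := stdOrthonormalBasis ℝ E
  rw [laplacian_eq_sum_fderiv_fderiv hg b]
  simp only [fderiv_fderiv_gaussian_apply, b.norm_eq_one]
  rw [← Finset.sum_mul, Finset.sum_sub_distrib, ← Finset.mul_sum, b.sum_sq_inner_left]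
  simp [mul_comm]

theorem exists_mul_le_laplacian_gaussian (p : E) {r k : ℝ} (hr : 0 < r) (hk : 0 ≤ k) :
    ∃ α > 0, ∀ x, r ≤ ‖x - p‖ →
      k * Real.exp (-α * ‖x - p‖ ^ 2) ≤ Δ (fun z => Real.exp (-α * ‖z - p‖ ^ 2)) x := by
  set d : ℝ := (Module.finrank ℝ E : ℝ)
  set α := 1 + (2 * d + k) / (4 * r ^ 2)
  have hα : 1 ≤ α := le_add_of_nonneg_right (by positivity)
  have hαr : 2 * d + k ≤ 4 * α * r ^ 2 := by
    rw [mul_comm 4, mul_assoc, add_mul, div_mul_cancel₀ _ (by positivity)]; nlinarith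
  refine ⟨α, by linarith, fun x hx => ?_⟩
  have hxr : r ^ 2 ≤ ‖x - p‖ ^ 2 := pow_le_pow_left₀ hr.le hx 2
  rw [laplacian_gaussian]
  gcongr ?_ * _
  nlinarith

theorem exists_le_laplacian_le_of_bddAbove {f : E → ℝ} (hf : ContDiff ℝ 2 f)
    (hbdd : BddAbove (range f)) (y : E) {δ : ℝ} (hδ : 0 < δ) :
    ∃ x, f y ≤ f x ∧ Δ f x ≤ 2 * δ * Module.finrank ℝ E := by
  obtain ⟨C, hC⟩ := hbdd
  set q : E → ℝ := fun z => ‖z - y‖ ^ 2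
  have hq : ContDiff ℝ 2 q := contDiff_norm_sub_sq y
  have hδq : ContDiff ℝ 2 (δ • q) := hq.const_smul δ
  have hg : ContDiff ℝ 2 (f - δ • q) := hf.sub hδq
  have hlim : Tendsto (f - δ • q) (cocompact E) atBot := by
    have hq_lim : Tendsto (fun z => δ * q z) (cocompact E) atTop := by
      simpa [q, dist_eq_norm] using ((tendsto_pow_atTop two_ne_zero).comp
        (tendsto_dist_right_cocompact_atTop y)).const_mul_atTop hδ
    refine tendsto_atBot_mono (fun z => ?_) (tendsto_atBot_add_const_left _ C
      (tendsto_neg_atTop_atBot.comp hq_lim))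
    simpa [sub_eq_add_neg] using hC (mem_range_self z)
  obtain ⟨x, hx⟩ := hg.continuous.exists_forall_ge hlim
  refine ⟨x, ?_, ?_⟩
  · have hxy := hx y
    have hqx : 0 ≤ q x := by positivity
    simp only [Pi.sub_apply, Pi.smul_apply, smul_eq_mul, q, sub_self, norm_zero] at hxy
    nlinarith
  · have hmax := IsLocalMax.laplacian_nonpos hg (Eventually.of_forall hx)
    rw [hf.contDiffAt.laplacian_sub hδq.contDiffAt, laplacian_smul _ hq.contDiffAt] at hmax
    simp only [smul_eq_mul, q, laplacian_norm_sub_sq] at hmax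
    linarith

theorem le_of_mul_sub_le_laplacian {W : E → ℝ} (hW : ContDiff ℝ 2 W) (hbdd : BddAbove (range W))
    {c M : ℝ} (hc : 0 < c) (hlap : ∀ x, c * (W x - M) ≤ Δ W x) (x : E) : W x ≤ M := by
  by_contra! hx
  set d : ℝ := (Module.finrank ℝ E : ℝ)
  have hd : 0 ≤ d := Nat.cast_nonneg _
  set δ := c * (W x - M) / (2 * (d + 1))
  have hδ : 0 < δ := div_pos (mul_pos hc (sub_pos.2 hx)) (by positivity)
  have hδd : 2 * δ * (d + 1) = c * (W x - M) := by
    simp only [δ]; field_simp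
  obtain ⟨y, hxy, hy⟩ := exists_le_laplacian_le_of_bddAbove hW hbdd x hδ
  nlinarith [hlap y, mul_le_mul_of_nonneg_left hxy hc.le]

theorem IsCompact.nonpos_of_laplacian_pos {K : Set E} (hK : IsCompact K) {v : E → ℝ}
    (hv : ContDiff ℝ 2 v) (hfr : ∀ x ∈ frontier K, v x ≤ 0)
    (hlap : ∀ x ∈ interior K, 0 < v x → 0 < Δ v x) {x : E} (hx : x ∈ K) : v x ≤ 0 := by
  by_contra! hpos
  obtain ⟨z, hzK, hzmax⟩ := hK.exists_isMaxOn ⟨x, hx⟩ hv.continuous.continuousOn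
  have hz : 0 < v z := hpos.trans_le (hzmax hx)
  have hzint : z ∈ interior K := by
    rw [← self_sdiff_frontier]
    exact ⟨hzK, fun hzfr => (hfr z hzfr).not_gt hz⟩
  exact (hlap z hzint hz).not_ge
    ((hzmax.isLocalMax (mem_interior_iff_mem_nhds.1 hzint)).laplacian_nonpos hv)

theorem laplacian_add_const_mul_sub_const {W G : E → ℝ} (hW : ContDiff ℝ 2 W)
    (hG : ContDiff ℝ 2 G) (ε a : ℝ) (x : E) :
    Δ (fun z => W z + ε * G z - a) x = Δ W x + ε * Δ G x := by
  have hεG : ContDiff ℝ 2 (ε • G) := hG.const_smul ε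
  have hWG : ContDiffAt ℝ 2 (W + ε • G) x := (hW.add hεG).contDiffAt
  have h : (fun z => W z + ε * G z - a) = W + ε • G - fun _ => a := rfl
  rw [h, hWG.laplacian_sub contDiffAt_const, hW.contDiffAt.laplacian_add hεG.contDiffAt,
    laplacian_smul _ hG.contDiffAt]
  simp

theorem exists_add_mul_gaussian_le {W : E → ℝ} (hW : ContDiff ℝ 2 W) {p : E} {R c M : ℝ}
    (hR : 0 < R) (hc : 0 ≤ c) (hlt : ∀ x ∈ ball p R, W x < M)
    (hlap : ∀ x ∈ closedBall p R, c * (W x - M) ≤ Δ W x) :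
    ∃ α ε : ℝ, 0 < α ∧ 0 < ε ∧ ∀ x ∈ closedBall p R \ ball p (R / 2),
      W x + ε * Real.exp (-α * ‖x - p‖ ^ 2) ≤ M + ε * Real.exp (-α * R ^ 2) := by
  obtain ⟨α, hα, hGlap⟩ := exists_mul_le_laplacian_gaussian p (half_pos hR) (k := c + 1)
    (by linarith)
  set G : E → ℝ := fun z => Real.exp (-α * ‖z - p‖ ^ 2)
  have hG : ContDiff ℝ 2 G := Real.contDiff_exp.comp (contDiff_const.mul (contDiff_norm_sub_sq p))
  set K := Real.exp (-α * R ^ 2)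
  set K₂ := Real.exp (-α * (R / 2) ^ 2)
  have hK : K < K₂ := Real.exp_lt_exp.2 (by nlinarith [mul_pos hα (pow_pos hR 2)])
  obtain ⟨x₂, hx₂, hx₂max⟩ := (isCompact_closedBall p (R / 2)).exists_isMaxOn
    ⟨p, mem_closedBall_self (by positivity)⟩ hW.continuous.continuousOn
  have hWx₂ : W x₂ < M := hlt x₂ (closedBall_subset_ball (by linarith) hx₂)
  -- `ε` is chosen so that `W + ε G ≤ M + ε K` on the inner sphere `‖x - p‖ = R / 2`.
  set ε := (M - W x₂) / (K₂ - K)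
  have hε : 0 < ε := div_pos (by linarith) (by linarith)
  have hεK : ε * K₂ - ε * K = M - W x₂ := by
    rw [← mul_sub]; exact div_mul_cancel₀ _ (by linarith)
  have hle : ∀ x ∈ closedBall p R, W x ≤ M := by
    rw [← closure_ball p hR.ne']
    exact closure_minimal (fun x hx => (hlt x hx).le) (isClosed_le hW.continuous continuous_const)
  have hv : ContDiff ℝ 2 fun z => W z + ε * G z - (M + ε * K) := by
    fun_prop
  refine ⟨α, ε, hα, hε, fun x hx => sub_nonpos.1 ?_⟩
  refine ((isCompact_closedBall p R).diff isOpen_ball).nonpos_of_laplacian_pos hv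
    (fun z hz => ?_) (fun z hz hvz => ?_) hx
  · have hzA := ((isCompact_closedBall p R).diff isOpen_ball).isClosed.frontier_subset hz
    rcases frontier_closedBall_diff_ball_subset p R (R / 2) hz with hzR | hzR
    · simp only [G, mem_sphere_iff_norm.1 hzR]
      linarith [hle z hzA.1]
    · have hWz : W z ≤ W x₂ := hx₂max (sphere_subset_closedBall hzR)
      simp only [G, mem_sphere_iff_norm.1 hzR]
      linarith
  · obtain ⟨hzR, hzR₂⟩ := interior_subset hz
    have hGz := hGlap z (by simpa [dist_eq_norm] using hzR₂)
    rw [laplacian_add_const_mul_sub_const hW hG]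
    nlinarith [hlap z hzR, mul_le_mul_of_nonneg_left hGz hε.le, mul_nonneg hc hvz.le,
      mul_pos hε (Real.exp_pos (-α * ‖z - p‖ ^ 2)), mul_nonneg (mul_nonneg hc hε.le) (Real.exp_pos (-α * R ^ 2)).le]

theorem hopf_lemma {W : E → ℝ} (hW : ContDiff ℝ 2 W) {p y : E} {R c M : ℝ} (hR : 0 < R)
    (hc : 0 ≤ c) (hlt : ∀ x ∈ ball p R, W x < M)
    (hlap : ∀ x ∈ closedBall p R, c * (W x - M) ≤ Δ W x) (hy : dist y p = R) (hWy : W y = M) :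
    fderiv ℝ W y (p - y) < 0 := by
  obtain ⟨α, ε, hα, hε, hbarrier⟩ := exists_add_mul_gaussian_le hW hR hc hlt hlap
  set A := closedBall p R \ ball p (R / 2)
  set G : E → ℝ := fun z => Real.exp (-α * ‖z - p‖ ^ 2)
  have hG : Differentiable ℝ G :=
    Real.differentiable_exp.comp ((differentiable_const _).mul
      ((contDiff_norm_sub_sq p (n := 1)).differentiable one_ne_zero))
  have hyR : ‖y - p‖ = R := by rw [← dist_eq_norm, hy]
  have hmax : IsLocalMaxOn (fun z => W z + ε * G z) A y := by
    refine IsMaxOn.localize fun z hz => ?_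
    simpa [G, hWy, hyR] using hbarrier z hz
  have hseg : segment ℝ y (y + (1 / 2 : ℝ) • (p - y)) ⊆ A := by
    rw [segment_eq_image']
    rintro _ ⟨θ, ⟨hθ0, hθ1⟩, rfl⟩
    have hdist : dist (y + θ • (y + (1 / 2 : ℝ) • (p - y) - y)) p = (1 - θ / 2) * R := by
      rw [dist_eq_norm, show y + θ • (y + (1 / 2 : ℝ) • (p - y) - y) - p = (1 - θ / 2) • (y - p)
        by module, norm_smul, hyR, Real.norm_of_nonneg (by linarith)]
    simp only [A, Set.mem_sdiff, mem_closedBall, mem_ball, hdist, not_lt]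
    constructor <;> nlinarith
  have hderiv := hmax.hasFDerivWithinAt_nonpos
    (((hW.differentiable two_ne_zero y).add ((hG y).const_mul ε)).hasFDerivAt.hasFDerivWithinAt)
    (mem_posTangentConeAt_of_segment_subset hseg)
  rw [fderiv_add (hW.differentiable two_ne_zero y) ((hG y).const_mul ε),
    fderiv_const_mul (hG y)] at hderiv
  have hinner : ⟪y - p, p - y⟫ = -R ^ 2 := by
    rw [← neg_sub y p, inner_neg_right, real_inner_self_eq_norm_sq, hyR]
  simp only [add_apply, smul_apply, smul_eq_mul, map_smul, G, fderiv_gaussian_apply, hinner,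
    hyR] at hderiv
  nlinarith [Real.exp_pos (-α * R ^ 2), mul_pos (mul_pos hε hα) (pow_pos hR 2)]

theorem eq_of_mul_sub_le_laplacian {W : E → ℝ} (hW : ContDiff ℝ 2 W) {c M : ℝ} (hc : 0 ≤ c)
    (hle : ∀ x, W x ≤ M) (hlap : ∀ x, c * (W x - M) ≤ Δ W x) {x₀ : E} (hx₀ : W x₀ = M) (x : E) :
    W x = M := by
  by_contra hne
  set Ω := {z | W z < M}
  have hΩ : IsClosed Ωᶜ := (isOpen_lt hW.continuous continuous_const).isClosed_compl
  have hx₀Ω : x₀ ∈ Ωᶜ := by simp [Ω, hx₀]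
  have hR : 0 < infDist x Ωᶜ :=
    (hΩ.notMem_iff_infDist_pos ⟨x₀, hx₀Ω⟩).1 (by simpa [Ω] using (hle x).lt_of_ne hne)
  obtain ⟨y, hyΩ, hyR⟩ := hΩ.exists_infDist_eq_dist ⟨x₀, hx₀Ω⟩ x
  have hWy : W y = M := le_antisymm (hle y) (by simpa [Ω] using hyΩ)
  have hneg := hopf_lemma hW hR hc (fun z hz => show z ∈ Ω from ball_infDist_compl_subset hz)
    (fun z _ => hlap z) (by rw [dist_comm, hyR]) hWy
  have hcrit : fderiv ℝ W y = 0 :=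
    IsLocalMax.fderiv_eq_zero (Eventually.of_forall fun z => hWy ▸ hle z)
  simp [hcrit] at hneg

end

theorem vectorLaplacian_eq_laplacian {n m : ℕ}
    {u : EuclideanSpace ℝ (Fin n) → EuclideanSpace ℝ (Fin m)} (hu : ContDiff ℝ 2 u) :
    vectorLaplacian u = Δ u := by
  funext x
  rw [laplacian_eq_sum_fderiv_fderiv hu (EuclideanSpace.basisFun (Fin n) ℝ)]
  simp [vectorLaplacian]

theorem ginzburg_landau_confinement {n m : ℕ}
    (u : EuclideanSpace ℝ (Fin n) → EuclideanSpace ℝ (Fin m))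
    (hu : ContDiff ℝ 2 u) (hbdd : ∃ C : ℝ, ∀ x, ‖u x‖ ≤ C)
    (hsol : ∀ x, vectorLaplacian u x = (‖u x‖ ^ 2 - 1) • u x) :
    (∀ x, ‖u x‖ ≤ 1) ∧ ((¬ ∃ c, ∀ x, u x = c) → ∀ x, ‖u x‖ < 1) := by
  rw [vectorLaplacian_eq_laplacian hu] at hsol
  set W := fun x => ‖u x‖ ^ 2
  have hW : ContDiff ℝ 2 W := hu.norm_sq ℝ
  have hlap : ∀ x, 2 * (W x - 1) ≤ Δ W x :=
    fun x => two_mul_sub_one_le_laplacian_norm_sq hu (hsol x)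
  obtain ⟨C, hC⟩ := hbdd
  have hWbdd : BddAbove (range W) := ⟨C ^ 2, by
    rintro _ ⟨x, rfl⟩
    exact pow_le_pow_left₀ (norm_nonneg _) (hC x) 2⟩
  have hWle : ∀ x, W x ≤ 1 := le_of_mul_sub_le_laplacian hW hWbdd two_pos hlap
  have hle : ∀ x, ‖u x‖ ≤ 1 := fun x =>
    (pow_le_one_iff_of_nonneg (norm_nonneg _) two_ne_zero).1 (hWle x)
  refine ⟨hle, fun hnc x => (hle x).lt_of_ne fun hx => hnc ?_⟩
  have hW1 := eq_of_mul_sub_le_laplacian hW zero_le_two hWle hlap (x₀ := x) (by simp [W, hx])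
  refine exists_forall_eq_of_laplacian_eq_zero_of_norm_eq hu (r := 1) (fun z => ?_) (fun z => ?_)
  · exact (pow_eq_one_iff_of_nonneg (norm_nonneg _) two_ne_zero).1 (hW1 z)
  · rw [hsol, show ‖u z‖ ^ 2 = 1 from hW1 z, sub_self, zero_smul]
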